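/- If U⁻, U⁺ are closed, disjoint, non-trivial conical intervals and v ∈ C(U⁻,U⁺), then for every unit-spacelike vector u with x⁻(u) ∈ U⁻ and x⁺(u) ∈ U⁺, one has ⟨v, u⟩ > 0; in particular the set C(U⁻,U⁺) is a non-empty open convex cone. -/

import Mathlib

noncomputable section

/-- The Lorentzian bilinear form of signature (2,1) on ℝ³. -/
def ldot (x y : Fin 3 → ℝ) : ℝ := x 0 * y 0 + x 1 * y 1 - x 2 * y 2

/-- The Lorentz cross-product, the unique bilinear map with ⟨u, v ⊠ w⟩ = det[u v w]. -/
def lcross (v w : Fin 3 → ℝ) : Fin 3 → ℝ :=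
  ![v 1 * w 2 - v 2 * w 1, v 2 * w 0 - v 0 * w 2, -(v 0 * w 1 - v 1 * w 0)]

/-- Determinant of the 3×3 matrix with columns x, y, z. -/
def det3 (x y z : Fin 3 → ℝ) : ℝ := (Matrix.transpose (Matrix.of ![x, y, z])).det

/-- A future-pointing lightlike vector of Euclidean length one (representing a
future-pointing lightlike ray). -/
def FutureUnitNull (x : Fin 3 → ℝ) : Prop :=
  ldot x x = 0 ∧ x 2 > 0 ∧ x 0 ^ 2 + x 1 ^ 2 + x 2 ^ 2 = 1

/-- The closed conical interval with boundary rays spanned by a and b, ordered so that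
⟨x, a ⊠ b⟩ ≥ 0 on the interval (a = x⁻(U), b = x⁺(U)). -/
def arc (a b : Fin 3 → ℝ) : Set (Fin 3 → ℝ) :=
  {x | FutureUnitNull x ∧ 0 ≤ ldot x (lcross a b)}

/-- (u, xm, xp) is a null frame: u is unit-spacelike, xm = x⁻(u) and xp = x⁺(u) are the
future-pointing Euclidean-unit lightlike vectors spanning u^⊥ ∩ lightcone, ordered so
that (u, xm, xp) is positively oriented. -/
def IsNullFramePair (u xm xp : Fin 3 → ℝ) : Prop :=
  ldot u u = 1 ∧ FutureUnitNull xm ∧ FutureUnitNull xp ∧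
  ldot xm u = 0 ∧ ldot xp u = 0 ∧ det3 u xm xp > 0

/-- The cone C(U⁻, U⁺): vectors pairing positively with every unit-spacelike u whose
null frame satisfies x⁻(u) ∈ U⁻ and x⁺(u) ∈ U⁺. -/
def coneC (Um Up : Set (Fin 3 → ℝ)) : Set (Fin 3 → ℝ) :=
  {v | ∀ u xm xp : Fin 3 → ℝ, IsNullFramePair u xm xp → xm ∈ Um → xp ∈ Up → 0 < ldot v u}

/-! For a null frame `(u, a, b)` the Gram determinant identity gives
`det[u a b] · det[v a b] = ⟨a, b⟩² ⟨v, u⟩`, so `⟨v, u⟩` has the sign of `det[v a b]`; as any two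
distinct future null rays are the null part of a frame, `C(U⁻, U⁺)` is the set of `v` with
`det[v a b] > 0` for all `a ∈ U⁻`, `b ∈ U⁺`. It is open because `U⁻ × U⁺` is compact.
Writing future null rays by angle, `det[x(t₁) x(t₂) x(t₃)]` is `√2` times the product of the
sines of the half-differences of the angles, positive exactly for counterclockwise triples;
hence a null vector pointing into a gap between the disjoint arcs `U⁺` and `U⁻` lies in the cone.
-/

open Real Set

lemma ldot_comm (x y : Fin 3 → ℝ) : ldot x y = ldot y x := by
  simp only [ldot]; ring

lemma ldot_add_left (x y z : Fin 3 → ℝ) : ldot (x + y) z = ldot x z + ldot y z := by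
  simp only [ldot, Pi.add_apply]; ring

lemma ldot_smul_left (t : ℝ) (x y : Fin 3 → ℝ) : ldot (t • x) y = t * ldot x y := by
  simp only [ldot, Pi.smul_apply, smul_eq_mul]; ring

lemma ldot_smul_right (t : ℝ) (x y : Fin 3 → ℝ) : ldot x (t • y) = t * ldot x y := by
  simp only [ldot, Pi.smul_apply, smul_eq_mul]; ring

lemma det3_eq (x y z : Fin 3 → ℝ) : det3 x y z =
    x 0 * y 1 * z 2 - x 0 * y 2 * z 1 - x 1 * y 0 * z 2 + x 1 * y 2 * z 0
      + x 2 * y 0 * z 1 - x 2 * y 1 * z 0 := by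
  simp [det3, Matrix.det_fin_three]

lemma det3_swap (x y z : Fin 3 → ℝ) : det3 x y z = -det3 y x z := by
  simp only [det3_eq]; ring

lemma det3_self_left (x y : Fin 3 → ℝ) : det3 x x y = 0 := by
  simp only [det3_eq]; ring

lemma det3_self_right (x y : Fin 3 → ℝ) : det3 y x y = 0 := by
  simp only [det3_eq]; ring

lemma ldot_lcross (v a b : Fin 3 → ℝ) : ldot v (lcross a b) = det3 v a b := by
  simp only [ldot, lcross, det3_eq, Matrix.cons_val_zero, Matrix.cons_val_one, Matrix.cons_val]
  ring

lemma ldot_lcross_self (a b : Fin 3 → ℝ) :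
    ldot (lcross a b) (lcross a b) = ldot a b ^ 2 - ldot a a * ldot b b := by
  simp only [ldot, lcross, Matrix.cons_val_zero, Matrix.cons_val_one, Matrix.cons_val]
  ring

-- The sign is `det diag(1, 1, -1)`.
lemma det3_mul_det3_eq_neg_det_gram (x y z x' y' z' : Fin 3 → ℝ) :
    det3 x y z * det3 x' y' z' =
      -!![ldot x x', ldot x y', ldot x z'; ldot y x', ldot y y', ldot y z';
          ldot z x', ldot z y', ldot z z'].det := by
  simp only [det3_eq, ldot, Matrix.det_fin_three, Matrix.of_apply, Matrix.cons_val',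
    Matrix.cons_val_zero, Matrix.cons_val_fin_one, Matrix.cons_val_one, Matrix.cons_val]
  ring

lemma IsNullFramePair.det3_mul_det3 {u a b : Fin 3 → ℝ} (hf : IsNullFramePair u a b)
    (v : Fin 3 → ℝ) : det3 u a b * det3 v a b = ldot a b ^ 2 * ldot v u := by
  obtain ⟨-, ha, hb, hau, hbu, -⟩ := hf
  rw [ldot_comm] at hau hbu
  rw [det3_mul_det3_eq_neg_det_gram]
  simp only [ldot_comm u v, ldot_comm b a, hau, hbu, ha.1, hb.1, Matrix.det_fin_three,
    Matrix.of_apply, Matrix.cons_val', Matrix.cons_val_zero, Matrix.cons_val_fin_one,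
    Matrix.cons_val_one, Matrix.cons_val]
  ring

lemma IsNullFramePair.ldot_pos_iff {u a b : Fin 3 → ℝ} (hf : IsNullFramePair u a b)
    (v : Fin 3 → ℝ) : 0 < ldot v u ↔ 0 < det3 v a b := by
  have hD : 0 < det3 u a b := hf.2.2.2.2.2
  have hq : 0 < ldot a b ^ 2 := by
    have h := hf.det3_mul_det3 u
    rw [hf.1, mul_one] at h
    rw [← h]; positivity
  have key := hf.det3_mul_det3 v
  constructor
  · intro h
    exact pos_of_mul_pos_right (key ▸ mul_pos hq h) hD.le
  · intro h
    exact pos_of_mul_pos_right (key ▸ mul_pos hD h) hq.le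

def nullVec (θ : ℝ) : Fin 3 → ℝ :=
  ![cos θ * (√2 / 2), sin θ * (√2 / 2), √2 / 2]

@[simp] lemma nullVec_zero (θ : ℝ) : nullVec θ 0 = cos θ * (√2 / 2) := rfl
@[simp] lemma nullVec_one (θ : ℝ) : nullVec θ 1 = sin θ * (√2 / 2) := rfl
@[simp] lemma nullVec_two (θ : ℝ) : nullVec θ 2 = √2 / 2 := rfl

lemma futureUnitNull_nullVec (θ : ℝ) : FutureUnitNull (nullVec θ) := by
  have h2 : √2 ^ 2 = 2 := sq_sqrt zero_le_two
  have hθ := sin_sq_add_cos_sq θ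
  refine ⟨?_, by simp, ?_⟩
  · simp only [ldot, nullVec_zero, nullVec_one, nullVec_two]
    linear_combination (√2 / 2) ^ 2 * hθ
  · simp only [nullVec_zero, nullVec_one, nullVec_two]
    linear_combination (√2 / 2) ^ 2 * hθ + h2 / 2

lemma continuous_nullVec : Continuous nullVec := by
  unfold nullVec; fun_prop

lemma nullVec_periodic : Function.Periodic nullVec (2 * π) := by
  intro θ; simp [nullVec]

lemma FutureUnitNull.apply_two {x : Fin 3 → ℝ} (hx : FutureUnitNull x) : x 2 = √2 / 2 := by
  obtain ⟨hnull, hpos, hunit⟩ := hx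
  have hsq : x 2 ^ 2 = (√2 / 2) ^ 2 := by
    rw [div_pow, sq_sqrt zero_le_two]; simp only [ldot] at hnull; linarith
  exact (pow_left_inj₀ hpos.le (by positivity) two_ne_zero).mp hsq

lemma exists_cos_eq_sin_eq {x y : ℝ} (h : x ^ 2 + y ^ 2 = 1) : ∃ θ, cos θ = x ∧ sin θ = y := by
  set z : ℂ := ⟨x, y⟩
  have hz : ‖z‖ = 1 := by
    rw [Complex.norm_def, Complex.normSq_mk, ← sq, ← sq, h, Real.sqrt_one]
  have hz0 : z ≠ 0 := by rintro h0; simp [h0] at hz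
  exact ⟨z.arg, by rw [Complex.cos_arg hz0, hz, div_one], by rw [Complex.sin_arg, hz, div_one]⟩

lemma FutureUnitNull.exists_eq_nullVec {x : Fin 3 → ℝ} (hx : FutureUnitNull x) :
    ∃ θ, x = nullVec θ := by
  have h2 : √2 ^ 2 = 2 := sq_sqrt zero_le_two
  have hx2 := hx.apply_two
  obtain ⟨hnull, -, -⟩ := hx
  simp only [ldot, hx2] at hnull
  obtain ⟨θ, hcos, hsin⟩ := exists_cos_eq_sin_eq (x := √2 * x 0) (y := √2 * x 1)
    (by linear_combination √2 ^ 2 * hnull + (√2 ^ 2 + 2) / 4 * h2)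
  refine ⟨θ, funext fun i => ?_⟩
  fin_cases i
  · simp only [Fin.zero_eta, nullVec_zero, hcos]; linear_combination (- x 0 / 2) * h2
  · simp only [Fin.mk_one, nullVec_one, hsin]; linear_combination (- x 1 / 2) * h2
  · exact hx2

lemma ldot_nullVec (s t : ℝ) : ldot (nullVec s) (nullVec t) = (cos (s - t) - 1) / 2 := by
  have h2 : √2 ^ 2 = 2 := sq_sqrt zero_le_two
  simp only [ldot, nullVec_zero, nullVec_one, nullVec_two, cos_sub]
  linear_combination (cos s * cos t + sin s * sin t - 1) / 4 * h2

lemma FutureUnitNull.ldot_neg_of_ne {a b : Fin 3 → ℝ} (ha : FutureUnitNull a)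
    (hb : FutureUnitNull b) (hab : a ≠ b) : ldot a b < 0 := by
  obtain ⟨s, rfl⟩ := ha.exists_eq_nullVec
  obtain ⟨t, rfl⟩ := hb.exists_eq_nullVec
  have hcos : cos (s - t) ≠ 1 := by
    rintro h
    obtain ⟨n, hn⟩ := (cos_eq_one_iff _).mp h
    exact hab (by rw [show s = t + n * (2 * π) by linarith, (nullVec_periodic.int_mul n) t])
  rw [ldot_nullVec]
  linarith [lt_of_le_of_ne (cos_le_one (s - t)) hcos]

lemma isNullFramePair_lcross {a b : Fin 3 → ℝ} (ha : FutureUnitNull a) (hb : FutureUnitNull b)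
    (hab : a ≠ b) : IsNullFramePair ((-ldot a b)⁻¹ • lcross a b) a b := by
  have hq := ha.ldot_neg_of_ne hb hab
  have hq0 := hq.ne
  have hw : ldot (lcross a b) (lcross a b) = ldot a b ^ 2 := by
    rw [ldot_lcross_self, ha.1, hb.1]; ring
  refine ⟨?_, ha, hb, ?_, ?_, ?_⟩
  · rw [ldot_smul_left, ldot_smul_right, hw]
    field_simp
  · rw [ldot_smul_right, ldot_lcross, det3_self_left, mul_zero]
  · rw [ldot_smul_right, ldot_lcross, det3_self_right, mul_zero]
  · rw [gt_iff_lt, ← ldot_lcross, ldot_smul_left, hw]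
    have h : (-ldot a b)⁻¹ * ldot a b ^ 2 = -ldot a b := by field_simp
    linarith

lemma mem_coneC_of_forall_det3_pos {Um Up : Set (Fin 3 → ℝ)} {v : Fin 3 → ℝ}
    (hv : ∀ a ∈ Um, ∀ b ∈ Up, 0 < det3 v a b) : v ∈ coneC Um Up :=
  fun _ a b hf ha hb => (hf.ldot_pos_iff v).mpr (hv a ha b hb)

lemma coneC_eq_setOf_det3_pos {Um Up : Set (Fin 3 → ℝ)} (hdisj : Disjoint Um Up)
    (hUm : ∀ x ∈ Um, FutureUnitNull x) (hUp : ∀ x ∈ Up, FutureUnitNull x) :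
    coneC Um Up = {v | ∀ p ∈ Um ×ˢ Up, 0 < det3 v p.1 p.2} := by
  ext v
  constructor
  · rintro hv ⟨a, b⟩ ⟨ha, hb⟩
    have hf := isNullFramePair_lcross (hUm a ha) (hUp b hb) (hdisj.ne_of_mem ha hb)
    exact (hf.ldot_pos_iff v).mp (hv _ a b hf ha hb)
  · exact fun hv => mem_coneC_of_forall_det3_pos fun a ha b hb => hv (a, b) ⟨ha, hb⟩

lemma convex_coneC (Um Up : Set (Fin 3 → ℝ)) : Convex ℝ (coneC Um Up) := by
  refine convex_iff_forall_pos.mpr fun x hx y hy s t hs ht _ u a b hf ha hb => ?_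
  rw [ldot_add_left, ldot_smul_left, ldot_smul_left]
  exact add_pos (mul_pos hs (hx u a b hf ha hb)) (mul_pos ht (hy u a b hf ha hb))

lemma smul_mem_coneC {Um Up : Set (Fin 3 → ℝ)} {v : Fin 3 → ℝ} (hv : v ∈ coneC Um Up)
    {t : ℝ} (ht : 0 < t) : t • v ∈ coneC Um Up := by
  intro u a b hf ha hb
  rw [ldot_smul_left]
  exact mul_pos ht (hv u a b hf ha hb)

lemma isOpen_setOf_forall_pos {X Y : Type*} [TopologicalSpace X] [TopologicalSpace Y]
    {K : Set Y} (hK : IsCompact K) {f : X → Y → ℝ} (hf : Continuous (Function.uncurry f)) :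
    IsOpen {x | ∀ y ∈ K, 0 < f x y} :=
  isOpen_iff_mem_nhds.mpr fun _ hx => hK.eventually_forall_of_forall_eventually
    fun y hy => (isOpen_lt continuous_const hf).mem_nhds (hx y hy)

lemma sin_add_sin_sub_sin_add (p q : ℝ) :
    sin (2 * p) + sin (2 * q) - sin (2 * p + 2 * q) = 4 * sin p * sin q * sin (p + q) := by
  rw [sin_two_mul, sin_two_mul, show 2 * p + 2 * q = 2 * (p + q) by ring, sin_two_mul, sin_add,
    cos_add]
  linear_combination (-2 * sin p * cos p) * sin_sq_add_cos_sq q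
    + (-2 * sin q * cos q) * sin_sq_add_cos_sq p

lemma det3_nullVec (t₁ t₂ t₃ : ℝ) : det3 (nullVec t₁) (nullVec t₂) (nullVec t₃) =
    √2 * (sin ((t₂ - t₁) / 2) * sin ((t₃ - t₂) / 2) * sin ((t₃ - t₁) / 2)) := by
  have h2 : √2 ^ 2 = 2 := sq_sqrt zero_le_two
  have key := sin_add_sin_sub_sin_add ((t₂ - t₁) / 2) ((t₃ - t₂) / 2)
  rw [show 2 * ((t₂ - t₁) / 2) = t₂ - t₁ by ring, show 2 * ((t₃ - t₂) / 2) = t₃ - t₂ by ring,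
    show t₂ - t₁ + (t₃ - t₂) = t₃ - t₁ by ring,
    show (t₂ - t₁) / 2 + (t₃ - t₂) / 2 = (t₃ - t₁) / 2 by ring, sin_sub, sin_sub, sin_sub] at key
  rw [det3_eq]
  simp only [nullVec_zero, nullVec_one, nullVec_two]
  linear_combination √2 ^ 3 / 8 * key
    + √2 / 2 * (sin ((t₂ - t₁) / 2) * sin ((t₃ - t₂) / 2) * sin ((t₃ - t₁) / 2)) * h2

lemma det3_nullVec_pos {t₁ t₂ t₃ : ℝ} (h₁₂ : t₁ < t₂) (h₂₃ : t₂ < t₃) (h₃₁ : t₃ < t₁ + 2 * π) :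
    0 < det3 (nullVec t₁) (nullVec t₂) (nullVec t₃) := by
  rw [det3_nullVec]
  have hsin {s : ℝ} (h₀ : 0 < s) (h₁ : s < 2 * π) : 0 < sin (s / 2) :=
    sin_pos_of_pos_of_lt_pi (by linarith) (by linarith)
  exact mul_pos (by positivity) (mul_pos (mul_pos (hsin (by linarith) (by linarith))
    (hsin (by linarith) (by linarith))) (hsin (by linarith) (by linarith)))

lemma det3_nullVec_nonneg {t₁ t₂ t₃ : ℝ} (h₁₂ : t₁ ≤ t₂) (h₂₃ : t₂ ≤ t₃)
    (h₃₁ : t₃ ≤ t₁ + 2 * π) : 0 ≤ det3 (nullVec t₁) (nullVec t₂) (nullVec t₃) := by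
  rw [det3_nullVec]
  have hsin {s : ℝ} (h₀ : 0 ≤ s) (h₁ : s ≤ 2 * π) : 0 ≤ sin (s / 2) :=
    sin_nonneg_of_nonneg_of_le_pi (by linarith) (by linarith)
  exact mul_nonneg (by positivity) (mul_nonneg (mul_nonneg (hsin (by linarith) (by linarith))
    (hsin (by linarith) (by linarith))) (hsin (by linarith) (by linarith)))

lemma nullVec_toIcoMod (a θ : ℝ) : nullVec (toIcoMod two_pi_pos a θ) = nullVec θ :=
  nullVec_periodic.sub_zsmul_eq _

lemma nullVec_toIocMod (a θ : ℝ) : nullVec (toIocMod two_pi_pos a θ) = nullVec θ :=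
  nullVec_periodic.sub_zsmul_eq _

lemma arc_nullVec {σ₁ σ₂ : ℝ} (h₁₂ : σ₁ < σ₂) (h₂₁ : σ₂ < σ₁ + 2 * π) :
    arc (nullVec σ₁) (nullVec σ₂) = nullVec '' Icc σ₂ (σ₁ + 2 * π) := by
  ext x
  constructor
  · rintro ⟨hx, hdet⟩
    obtain ⟨θ₀, rfl⟩ := hx.exists_eq_nullVec
    obtain ⟨hθ₁, hθ₂⟩ := toIocMod_mem_Ioc two_pi_pos σ₁ θ₀
    refine ⟨toIocMod two_pi_pos σ₁ θ₀, ⟨?_, hθ₂⟩, nullVec_toIocMod σ₁ θ₀⟩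
    by_contra! h
    rw [ldot_lcross, ← nullVec_toIocMod σ₁ θ₀, det3_swap] at hdet
    linarith [det3_nullVec_pos hθ₁ h h₂₁]
  · rintro ⟨θ, ⟨hθ₁, hθ₂⟩, rfl⟩
    refine ⟨futureUnitNull_nullVec θ, ?_⟩
    rw [ldot_lcross, ← nullVec_periodic.sub_eq θ]
    exact det3_nullVec_nonneg (by linarith) h₁₂.le (by linarith)

lemma FutureUnitNull.exists_eq_nullVec_of_ne {a b : Fin 3 → ℝ} (ha : FutureUnitNull a)
    (hb : FutureUnitNull b) (hab : a ≠ b) (t : ℝ) :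
    ∃ σ₁ σ₂, a = nullVec σ₁ ∧ b = nullVec σ₂ ∧ σ₁ < σ₂ ∧ σ₂ < σ₁ + 2 * π ∧
      t ≤ σ₂ ∧ σ₂ < t + 2 * π := by
  obtain ⟨θa, rfl⟩ := ha.exists_eq_nullVec
  obtain ⟨θb, rfl⟩ := hb.exists_eq_nullVec
  set σ₂ := toIcoMod two_pi_pos t θb
  set σ₁ := toIocMod two_pi_pos (σ₂ - 2 * π) θa
  obtain ⟨hσ₂, hσ₂'⟩ := toIcoMod_mem_Ico two_pi_pos t θb
  obtain ⟨hσ₁, hσ₁'⟩ := toIocMod_mem_Ioc two_pi_pos (σ₂ - 2 * π) θa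
  have hne : σ₁ ≠ σ₂ := fun h => hab <| by
    rw [← nullVec_toIocMod (σ₂ - 2 * π) θa, ← nullVec_toIcoMod t θb]
    exact congrArg nullVec h
  exact ⟨σ₁, σ₂, (nullVec_toIocMod _ _).symm, (nullVec_toIcoMod _ _).symm,
    lt_of_le_of_ne (by linarith) hne, by linarith, hσ₂, hσ₂'⟩

lemma isCompact_arc {a b : Fin 3 → ℝ} (ha : FutureUnitNull a) (hb : FutureUnitNull b)
    (hab : a ≠ b) : IsCompact (arc a b) := by
  obtain ⟨σ₁, σ₂, rfl, rfl, h₁₂, h₂₁, -⟩ := ha.exists_eq_nullVec_of_ne hb hab 0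
  rw [arc_nullVec h₁₂ h₂₁]
  exact isCompact_Icc.image continuous_nullVec

lemma isOpen_coneC_arc {am bm ap bp : Fin 3 → ℝ}
    (ham : FutureUnitNull am) (hbm : FutureUnitNull bm)
    (hap : FutureUnitNull ap) (hbp : FutureUnitNull bp)
    (hntm : am ≠ bm) (hntp : ap ≠ bp) (hdisj : Disjoint (arc am bm) (arc ap bp)) :
    IsOpen (coneC (arc am bm) (arc ap bp)) := by
  rw [coneC_eq_setOf_det3_pos hdisj (fun x hx => hx.1) (fun x hx => hx.1)]
  refine isOpen_setOf_forall_pos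
    ((isCompact_arc ham hbm hntm).prod (isCompact_arc hap hbp hntp)) ?_
  simp only [det3_eq]
  fun_prop

lemma coneC_arc_nonempty {am bm ap bp : Fin 3 → ℝ}
    (ham : FutureUnitNull am) (hbm : FutureUnitNull bm)
    (hap : FutureUnitNull ap) (hbp : FutureUnitNull bp)
    (hntm : am ≠ bm) (hntp : ap ≠ bp) (hdisj : Disjoint (arc am bm) (arc ap bp)) :
    (coneC (arc am bm) (arc ap bp)).Nonempty := by
  obtain ⟨α, β, rfl, rfl, hαβ, hβα, -⟩ := ham.exists_eq_nullVec_of_ne hbm hntm 0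
  obtain ⟨γ, δ, rfl, rfl, hγδ, hδγ, hβδ, hδβ⟩ := hap.exists_eq_nullVec_of_ne hbp hntp β
  rw [arc_nullVec hαβ hβα, arc_nullVec hγδ hδγ] at hdisj ⊢
  have hαδ : α + 2 * π < δ := by
    by_contra! h
    exact hdisj.ne_of_mem (mem_image_of_mem _ ⟨hβδ, h⟩) (mem_image_of_mem _ ⟨le_rfl, hδγ.le⟩) rfl
  have hγβ : γ < β := by
    by_contra! h
    exact hdisj.ne_of_mem (mem_image_of_mem _ ⟨le_rfl, hβα.le⟩)
      (mem_image_of_mem _ ⟨hδβ.le, by linarith⟩) (nullVec_periodic β).symm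
  -- the null direction halfway along the gap from the end of `U⁺` to the start of `U⁻`
  refine ⟨nullVec ((γ + β) / 2), mem_coneC_of_forall_det3_pos ?_⟩
  rintro _ ⟨θa, ⟨ha₁, ha₂⟩, rfl⟩ _ ⟨θb, ⟨hb₁, hb₂⟩, rfl⟩
  exact det3_nullVec_pos (by linarith) (by linarith) (by linarith)

/-- Every v ∈ C(U⁻, U⁺) pairs positively with every unit-spacelike u whose null frame
has x⁻(u) ∈ U⁻ and x⁺(u) ∈ U⁺; moreover C(U⁻, U⁺) is a non-empty open convex cone. -/
theorem stmt_14 (am bm ap bp : Fin 3 → ℝ)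
    (ham : FutureUnitNull am) (hbm : FutureUnitNull bm)
    (hap : FutureUnitNull ap) (hbp : FutureUnitNull bp)
    (hntm : am ≠ bm) (hntp : ap ≠ bp)
    (hdisj : Disjoint (arc am bm) (arc ap bp)) :
    (∀ v ∈ coneC (arc am bm) (arc ap bp), ∀ u xm xp : Fin 3 → ℝ,
        IsNullFramePair u xm xp → xm ∈ arc am bm → xp ∈ arc ap bp → 0 < ldot v u) ∧
    (coneC (arc am bm) (arc ap bp)).Nonempty ∧
    IsOpen (coneC (arc am bm) (arc ap bp)) ∧
    Convex ℝ (coneC (arc am bm) (arc ap bp)) ∧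
    (∀ v ∈ coneC (arc am bm) (arc ap bp), ∀ t : ℝ, 0 < t →
        t • v ∈ coneC (arc am bm) (arc ap bp)) :=
  ⟨fun _ hv => hv, coneC_arc_nonempty ham hbm hap hbp hntm hntp hdisj,
    isOpen_coneC_arc ham hbm hap hbp hntm hntp hdisj, convex_coneC _ _,
    fun _ hv _ ht => smul_mem_coneC hv ht⟩
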